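/- arXiv:2504.12874 — 4 statements merged into one kernel-verified Lean document; each statement's English description precedes it below -/
import Mathlib

section
/- Let M be an object of Morph(Mod-R), i.e. an R-linear map μ_M : M0 → M1 between right R-modules, and suppose that End(M0) and End(M1) are semilocal rings. Then the endomorphism ring E_M of M in Morph(Mod-R) is a semilocal ring. -/
universe u

/-- The endomorphism ring `E_M` of an object `μ : M₀ → M₁` of the morphism category
`Morph(Mod-A)`: pairs `(u₀, u₁)` of endomorphisms with `u₁ ∘ μ = μ ∘ u₀`, as a subring of
`End(M₀) × End(M₁)`. -/
def MorphEnd {A : Type u} [Ring A] {M₀ M₁ : Type u} [AddCommGroup M₀] [AddCommGroup M₁]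
    [Module A M₀] [Module A M₁] (μ : M₀ →ₗ[A] M₁) :
    Subring (Module.End A M₀ × Module.End A M₁) where
  carrier := {u | ∀ x, u.2 (μ x) = μ (u.1 x)}
  mul_mem' {a b} ha hb := fun x => by
    show (a.2 * b.2) (μ x) = μ ((a.1 * b.1) x)
    rw [Module.End.mul_apply, Module.End.mul_apply, hb x, ha (b.1 x)]
  one_mem' := fun x => rfl
  add_mem' {a b} ha hb := fun x => by
    show (a.2 + b.2) (μ x) = μ ((a.1 + b.1) x)
    rw [LinearMap.add_apply, LinearMap.add_apply, map_add, ha x, hb x]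
  zero_mem' := fun x => by
    show (0 : Module.End _ _) (μ x) = μ ((0 : Module.End _ _) x)
    simp
  neg_mem' {a} ha := fun x => by
    show (-a.2) (μ x) = μ ((-a.1) x)
    simp [ha x]

/-- A ring `S` is semilocal if `S/J(S)` is a semisimple (artinian) ring, where `J(S)` is
the Jacobson radical of `S`. -/
def IsSemilocalRing (S : Type*) [Ring S] : Prop :=
  IsSemisimpleRing ((⊥ : TwoSidedIdeal S).jacobson.ringCon).Quotient

/-!
A ring homomorphism `f : S → Q` that reflects units (a local morphism) into an artinian ring `Q`
makes `S` semilocal (Camps–Dicks). As `Q` is also noetherian, every nonempty `P ⊆ S` contains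
an `x` for which the left annihilator of `f x` in `Q` is maximal. If also `x - xσx ∈ P`, then
`1 - σx` must be a unit: otherwise `1 - f σ f x` is a nonunit of the artinian ring `Q`, so it has
a nonzero left annihilator, and the annihilator of `f (x - xσx) = f x (1 - f σ f x)` is strictly
larger. For suitable choices of `P` this shows that `S / J(S)` is von Neumann regular and that
each of its left ideals is generated by an idempotent, i.e. that `S / J(S)` is semisimple.

The map `E_M → End(M₀)/J × End(M₁)/J` is such a local morphism: units lift modulo the Jacobson
radical, and the inverse of an invertible pair commuting with `μ` again commutes with `μ`.
-/

open LinearMap (ker toSpanSingleton)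

section Jacobson

variable {S : Type*} [Ring S]

theorem TwoSidedIdeal.mem_jacobson_bot_iff_forall_isUnit {x : S} :
    x ∈ (⊥ : TwoSidedIdeal S).jacobson ↔ ∀ y, IsUnit (1 + y * x) := by
  have left_inv {x : S} :
      x ∈ (⊥ : TwoSidedIdeal S).jacobson ↔ ∀ y, ∃ z, z * (1 + y * x) = 1 := by
    simp only [mem_jacobson_iff, mem_bot, sub_eq_zero, mul_add, mul_one, mul_assoc, add_comm]
  refine ⟨fun hx y => ?_, fun h => left_inv.2 fun y => ⟨_, (h y).unit.inv_val⟩⟩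
  obtain ⟨z, hz⟩ := left_inv.1 hx y
  have hz' : z = 1 - z * y * x := by rw [eq_sub_iff_add_eq, ← hz]; noncomm_ring
  -- `z = 1 - z y x` has a left inverse as well, since `z y x ∈ J`
  obtain ⟨w, hw⟩ := left_inv.1 (mul_mem_left _ (z * y) x hx) (-1)
  have hwz : w * z = 1 := by
    rw [← hw, neg_one_mul, ← sub_eq_add_neg, ← hz']
  obtain rfl := left_inv_eq_right_inv hwz hz
  exact isUnit_iff_exists_and_exists.2 ⟨⟨z, hwz⟩, ⟨z, hz⟩⟩

abbrev JacobsonQuotient (S : Type*) [Ring S] : Type _ :=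
  ((⊥ : TwoSidedIdeal S).jacobson.ringCon).Quotient

namespace JacobsonQuotient

def mk : S →+* JacobsonQuotient S := (⊥ : TwoSidedIdeal S).jacobson.ringCon.mk'

theorem mk_surjective : Function.Surjective (mk : S →+* JacobsonQuotient S) :=
  RingCon.mk'_surjective _

theorem mk_eq_mk_iff {x y : S} : mk x = mk y ↔ x - y ∈ (⊥ : TwoSidedIdeal S).jacobson :=
  (RingCon.eq _).trans (TwoSidedIdeal.rel_iff _ _ _)

theorem mk_eq_zero_iff {x : S} : mk x = 0 ↔ x ∈ (⊥ : TwoSidedIdeal S).jacobson := by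
  rw [← map_zero mk, mk_eq_mk_iff, sub_zero]

theorem isUnit_of_mk_eq_one {x : S} (h : mk x = 1) : IsUnit x := by
  rw [← map_one mk, mk_eq_mk_iff, TwoSidedIdeal.mem_jacobson_bot_iff_forall_isUnit] at h
  simpa using h 1

instance : IsLocalHom (mk : S →+* JacobsonQuotient S) where
  map_nonunit x hx := by
    obtain ⟨y, hy⟩ := mk_surjective (↑hx.unit⁻¹ : JacobsonQuotient S)
    obtain ⟨u, hu⟩ := isUnit_of_mk_eq_one (x := x * y) (by rw [map_mul, hy, IsUnit.mul_val_inv])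
    obtain ⟨v, hv⟩ := isUnit_of_mk_eq_one (x := y * x) (by rw [map_mul, hy, IsUnit.val_inv_mul])
    refine isUnit_iff_exists_and_exists.2 ⟨⟨y * u⁻¹, ?_⟩, ⟨v⁻¹ * y, ?_⟩⟩
    · rw [← mul_assoc, ← hu, u.mul_inv]
    · rw [mul_assoc, ← hv, v.inv_mul]

end JacobsonQuotient

end Jacobson

section Artinian

variable {Q : Type*} [Ring Q] [IsArtinianRing Q]

theorem IsArtinianRing.exists_mul_eq_zero_ne_zero {q : Q} (hq : ¬IsUnit q) :
    ∃ w, w * q = 0 ∧ w ≠ 0 := by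
  simpa [IsArtinianRing.isUnit_iff_isRightRegular, isRightRegular_iff_left_eq_zero_of_mul]
    using hq

theorem IsArtinianRing.ker_toSpanSingleton_lt {a b : Q} (h : ¬IsUnit (1 - b * a)) :
    ker (toSpanSingleton Q Q a) < ker (toSpanSingleton Q Q (a * (1 - b * a))) := by
  obtain ⟨w, hw, hw0⟩ := exists_mul_eq_zero_ne_zero h
  have hwba : w * b * a = w := by
    rw [mul_sub, mul_one, sub_eq_zero] at hw
    rw [mul_assoc, ← hw]
  refine SetLike.lt_iff_le_and_exists.2 ⟨fun t ht => ?_, w * b, ?_, ?_⟩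
  · simp_all [← mul_assoc]
  · simp [← mul_assoc, hwba, hw]
  · simpa [hwba] using hw0

end Artinian

section LocalHom

variable {S Q : Type*} [Ring S] [Ring Q] [IsArtinianRing Q] (f : S →+* Q) [IsLocalHom f]

include f in
theorem exists_mem_forall_isUnit_one_sub_mul {P : Set S} (hP : P.Nonempty) :
    ∃ x ∈ P, ∀ σ, x - x * σ * x ∈ P → IsUnit (1 - σ * x) := by
  obtain ⟨_, ⟨x, hx, rfl⟩, hmax⟩ := set_has_maximal_iff_noetherian.2 inferInstance
    ((fun x => ker (toSpanSingleton Q Q (f x))) '' P) (hP.image _)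
  refine ⟨x, hx, fun σ hσ => by_contra fun hu => hmax _ ⟨_, hσ, rfl⟩ ?_⟩
  have hlt := IsArtinianRing.ker_toSpanSingleton_lt (a := f x) (b := f σ)
    fun h => hu (isUnit_of_map_unit f _ (by simpa using h))
  simpa [mul_sub, mul_assoc] using hlt

namespace JacobsonQuotient

include f

theorem exists_mul_mul_eq_self (a : JacobsonQuotient S) : ∃ b, a * b * a = a := by
  obtain ⟨a, rfl⟩ := mk_surjective a
  obtain ⟨_, ⟨b, rfl⟩, hb⟩ := exists_mem_forall_isUnit_one_sub_mul f
    (P := Set.range fun b => a - a * b * a) ⟨_, 0, rfl⟩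
  have hJ : a - a * b * a ∈ (⊥ : TwoSidedIdeal S).jacobson :=
    TwoSidedIdeal.mem_jacobson_bot_iff_forall_isUnit.2 fun y => by
      simpa using hb (-y) ⟨b - (1 - b * a) * y * (1 - a * b), by noncomm_ring⟩
  refine ⟨mk b, ?_⟩
  rw [← map_mul, ← map_mul, eq_comm, ← sub_eq_zero, ← map_sub, mk_eq_zero_iff]
  exact hJ

theorem exists_isIdempotentElem_eq_span
    (N : Submodule (JacobsonQuotient S) (JacobsonQuotient S)) :
    ∃ e, IsIdempotentElem e ∧ N = Submodule.span _ {e} := by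
  obtain ⟨x, ⟨hp, hpN⟩, hmax⟩ := exists_mem_forall_isUnit_one_sub_mul f
    (P := {x | IsIdempotentElem (mk x) ∧ 1 - mk x ∈ N}) ⟨1, by simp [IsIdempotentElem]⟩
  set p := mk x
  refine ⟨1 - p, hp.one_sub,
    le_antisymm (fun a ha => ?_) (Submodule.span_le.2 (Set.singleton_subset_iff.2 hpN))⟩
  suffices a * p = 0 from
    Submodule.mem_span_singleton.2 ⟨a, by rw [smul_eq_mul, mul_sub, mul_one, this, sub_zero]⟩
  obtain ⟨y, hy⟩ := exists_mul_mul_eq_self f (a * p)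
  set h := y * (a * p) with h_def
  have hhp : h * p = h := by rw [h_def, mul_assoc, mul_assoc, hp.eq]
  have hh : IsIdempotentElem h := by
    rw [IsIdempotentElem, h_def, mul_assoc, ← mul_assoc (a * p), hy]
  have hp' : IsIdempotentElem (p - p * h) := by
    rw [IsIdempotentElem, show (p - p * h) * (p - p * h) = p * p - p * p * h - p * (h * p)
      + p * (h * p) * h by noncomm_ring, hp.eq, hhp, mul_assoc, hh.eq]
    abel
  have hphN : p * h ∈ N := by
    rw [show p * h = (p * y) * a - (p * y * a) * (1 - p) by rw [h_def]; noncomm_ring]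
    exact N.sub_mem (N.smul_mem _ ha) (N.smul_mem _ hpN)
  -- `p - p h` is again admissible, so maximality of `x` forces the idempotent `h` to vanish
  obtain ⟨σ, hσ⟩ := mk_surjective (y * a)
  have hmk : mk (x - x * σ * x) = p - p * h := by simp [hσ, p, h_def, mul_assoc]
  have hunit : IsUnit (1 - h) := by
    simpa [hσ, h_def, mul_assoc] using
      (hmax σ ⟨hmk ▸ hp', by
        rw [hmk, sub_sub_eq_add_sub, add_sub_right_comm]; exact N.add_mem hpN hphN⟩).map mk
  have h0 : h = 0 := hunit.mul_right_eq_zero.1 (by rw [sub_mul, one_mul, hh.eq, sub_self])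
  rw [← hy, mul_assoc (a * p), ← h_def, h0, mul_zero]

end JacobsonQuotient

include f in
theorem isSemilocalRing_of_isLocalHom : IsSemilocalRing S := by
  refine (isSemisimpleModule_iff _ _).2 ⟨fun N => ?_⟩
  obtain ⟨e, he, rfl⟩ := JacobsonQuotient.exists_isIdempotentElem_eq_span f N
  rw [← LinearMap.range_toSpanSingleton]
  exact ⟨_, LinearMap.IsIdempotentElem.isCompl
    (LinearMap.toSpanSingleton_isIdempotentElem_iff.2 he)⟩

end LocalHom

instance RingHom.isLocalHom_prodMap {A A' B B' : Type*} [Semiring A] [Semiring A']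
    [Semiring B] [Semiring B'] (f : A →+* A') (g : B →+* B') [IsLocalHom f] [IsLocalHom g] :
    IsLocalHom (f.prodMap g) where
  map_nonunit x hx := by
    rw [Prod.isUnit_iff] at hx ⊢
    exact ⟨isUnit_of_map_unit f _ hx.1, isUnit_of_map_unit g _ hx.2⟩

instance MorphEnd.isLocalHom_subtype {A : Type u} [Ring A] {M₀ M₁ : Type u} [AddCommGroup M₀]
    [AddCommGroup M₁] [Module A M₀] [Module A M₁] (μ : M₀ →ₗ[A] M₁) :
    IsLocalHom (MorphEnd μ).subtype where
  map_nonunit u hu := by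
    obtain ⟨⟨w, v, hwv, hvw⟩, rfl : w = u⟩ := hu
    have hcomm (x : M₀) : (u : Module.End A M₀ × Module.End A M₁).2 (μ x) = μ (u.1.1 x) :=
      u.2 x
    have hv : v ∈ MorphEnd μ := fun x => calc
      v.2 (μ x) = v.2 (μ (u.1.1 (v.1 x))) := by
        rw [← Module.End.mul_apply, ← Prod.fst_mul, hwv]; rfl
      _ = v.2 (u.1.2 (μ (v.1 x))) := by rw [hcomm]
      _ = μ (v.1 x) := by rw [← Module.End.mul_apply, ← Prod.snd_mul, hvw]; rfl
    exact ⟨⟨u, ⟨v, hv⟩, Subtype.ext hwv, Subtype.ext hvw⟩, rfl⟩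

/-- Let `M` be an object of `Morph(Mod-R)`, i.e. an `R`-linear map
`μ : M₀ → M₁` between right `R`-modules, and suppose that `End(M₀)` and `End(M₁)` are
semilocal rings. Then the endomorphism ring `E_M` of `M` in `Morph(Mod-R)` is a semilocal
ring. -/
theorem morphEnd_semilocal (R : Type u) [Ring R] (M₀ M₁ : Type u)
    [AddCommGroup M₀] [AddCommGroup M₁] [Module Rᵐᵒᵖ M₀] [Module Rᵐᵒᵖ M₁]
    (μ : M₀ →ₗ[Rᵐᵒᵖ] M₁)
    (h₀ : IsSemilocalRing (Module.End Rᵐᵒᵖ M₀))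
    (h₁ : IsSemilocalRing (Module.End Rᵐᵒᵖ M₁)) :
    IsSemilocalRing (MorphEnd μ) := by
  have : IsSemisimpleRing (JacobsonQuotient (Module.End Rᵐᵒᵖ M₀)) := h₀
  have : IsSemisimpleRing (JacobsonQuotient (Module.End Rᵐᵒᵖ M₁)) := h₁
  exact isSemilocalRing_of_isLocalHom
    ((JacobsonQuotient.mk.prodMap JacobsonQuotient.mk).comp (MorphEnd μ).subtype)
end

section
/- Let M be an object of Morph(Mod-R), i.e. an R-linear map μ_M : M0 → M1 between right R-modules. Suppose End(M0) is a ring of type n with maximal right ideals I_1, …, I_n and End(M1) is a ring of type m with maximal right ideals K_1, …, K_m. Then the endomorphism ring E_M of M in Morph(Mod-R) is a ring of type at most n + m, and every maximal right ideal of E_M is among the completely prime two-sided ideals (I_t × End(M1)) ∩ E_M (t = 1, …, n) and (End(M0) × K_q) ∩ E_M (q = 1, …, m), where E_M is identified with its image in End(M0) × End(M1) via the canonical embedding (u0, u1) ↦ (u0, u1). -/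
/-!
An endomorphism `(u₀, u₁)` of `μ` with `u₀` in no `I_t` and `u₁` in no `K_q` has invertible
components (in a ring of finite type an element outside every maximal right ideal is a unit), and
the pair of inverses again commutes with `μ`, so it is a unit of `E_M`. Hence every proper right
ideal of `E_M` is covered by the `n + m` ideals `(I_t × End(M₁)) ∩ E_M` and
`(End(M₀) × K_q) ∩ E_M`. These are completely prime, being preimages of maximal right ideals that
are two-sided, and prime avoidance holds for completely prime ideals of noncommutative rings, so a
maximal right ideal of `E_M` lies in, hence equals, one of them.
-/

universe u

/-- `J` is a right ideal of the ring `A` (as a set). -/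
def IsRightIdealSet {A : Type*} [Ring A] (J : Set A) : Prop :=
  (0 : A) ∈ J ∧ (∀ x ∈ J, ∀ y ∈ J, x + y ∈ J) ∧ (∀ x ∈ J, ∀ a : A, x * a ∈ J) ∧
    ∀ x ∈ J, -x ∈ J

/-- `J` is a maximal right ideal of the ring `A`. -/
def IsMaxRightIdealSet {A : Type*} [Ring A] (J : Set A) : Prop :=
  IsRightIdealSet J ∧ J ≠ Set.univ ∧
    ∀ K : Set A, IsRightIdealSet K → J ⊆ K → K ≠ Set.univ → K = J

/-- `J` is a left ideal of the ring `A` (as a set). -/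
def IsLeftIdealSet {A : Type*} [Ring A] (J : Set A) : Prop :=
  (0 : A) ∈ J ∧ (∀ x ∈ J, ∀ y ∈ J, x + y ∈ J) ∧ (∀ x ∈ J, ∀ a : A, a * x ∈ J) ∧
    ∀ x ∈ J, -x ∈ J

/-- `J` is a maximal left ideal of the ring `A`. -/
def IsMaxLeftIdealSet {A : Type*} [Ring A] (J : Set A) : Prop :=
  IsLeftIdealSet J ∧ J ≠ Set.univ ∧
    ∀ K : Set A, IsLeftIdealSet K → J ⊆ K → K ≠ Set.univ → K = J

/-- `J` is a two-sided ideal of the ring `A` (as a set). -/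
def IsTwoSidedIdealSet {A : Type*} [Ring A] (J : Set A) : Prop :=
  IsRightIdealSet J ∧ ∀ x ∈ J, ∀ a : A, a * x ∈ J

/-- `J` is a completely prime (proper, two-sided) ideal of the ring `A`: for all
`x, y ∈ A`, `x * y ∈ J` implies `x ∈ J` or `y ∈ J`. -/
def IsCompletelyPrimeIdealSet {A : Type*} [Ring A] (J : Set A) : Prop :=
  IsTwoSidedIdealSet J ∧ J ≠ Set.univ ∧ ∀ x y : A, x * y ∈ J → x ∈ J ∨ y ∈ J

/-- A ring `A` is of type `n` if it has exactly `n` maximal right ideals and these are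
all two-sided ideals. -/
def RingOfType (A : Type*) [Ring A] (n : ℕ) : Prop :=
  ∃ s : Finset (Set A), s.card = n ∧ (∀ J : Set A, IsMaxRightIdealSet J ↔ J ∈ s) ∧
    ∀ J ∈ s, IsTwoSidedIdealSet J

section RightIdeals

variable {A : Type*} [Ring A] {J : Set A}

lemma IsRightIdealSet.eq_univ_of_one_mem (hJ : IsRightIdealSet J) (h1 : (1 : A) ∈ J) :
    J = Set.univ :=
  Set.eq_univ_of_forall fun a => by simpa using hJ.2.2.1 1 h1 a

lemma IsRightIdealSet.one_notMem (hJ : IsRightIdealSet J) (hne : J ≠ Set.univ) :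
    (1 : A) ∉ J :=
  fun h1 => hne (hJ.eq_univ_of_one_mem h1)

lemma IsRightIdealSet.not_isUnit_of_mem (hJ : IsRightIdealSet J) (hne : J ≠ Set.univ) {x : A}
    (hx : x ∈ J) : ¬IsUnit x := by
  rintro ⟨x, rfl⟩
  exact hJ.one_notMem hne (by simpa using hJ.2.2.1 _ hx ↑x⁻¹)

lemma IsRightIdealSet.add_mem_iff_right (hJ : IsRightIdealSet J) {x y : A} (hx : x ∈ J) :
    x + y ∈ J ↔ y ∈ J := by
  refine ⟨fun hxy => ?_, hJ.2.1 x hx y⟩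
  simpa using hJ.2.1 _ (hJ.2.2.2 x hx) _ hxy

lemma IsRightIdealSet.list_prod_mem (hJ : IsRightIdealSet J) {l : List A} (hl : l ≠ [])
    (h : ∀ x ∈ l, x ∈ J) : l.prod ∈ J := by
  cases l with
  | nil => exact absurd rfl hl
  | cons a l =>
    rw [List.prod_cons]
    exact hJ.2.2.1 a (h a List.mem_cons_self) l.prod

lemma IsTwoSidedIdealSet.list_prod_mem (hJ : IsTwoSidedIdealSet J) {l : List A} {x : A}
    (hxl : x ∈ l) (hxJ : x ∈ J) : l.prod ∈ J := by
  induction l with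
  | nil => simp at hxl
  | cons a l ih =>
    rw [List.prod_cons]
    rcases List.mem_cons.mp hxl with rfl | hxl
    · exact hJ.1.2.2.1 x hxJ l.prod
    · exact hJ.2 _ (ih hxl) a

lemma IsCompletelyPrimeIdealSet.list_prod_notMem (hJ : IsCompletelyPrimeIdealSet J) {l : List A}
    (h : ∀ x ∈ l, x ∉ J) : l.prod ∉ J := by
  induction l with
  | nil => simpa using hJ.1.1.one_notMem hJ.2.1
  | cons a l ih =>
    rw [List.prod_cons]
    rintro hal
    rcases hJ.2.2 a l.prod hal with ha | hl
    · exact h a List.mem_cons_self ha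
    · exact ih (fun x hx => h x (List.mem_cons_of_mem a hx)) hl

lemma IsCompletelyPrimeIdealSet.preimage {B : Type*} [Ring B] (f : A →+* B) {J : Set B}
    (hJ : IsCompletelyPrimeIdealSet J) : IsCompletelyPrimeIdealSet (f ⁻¹' J) := by
  refine ⟨⟨⟨?_, fun x hx y hy => ?_, fun x hx a => ?_, fun x hx => ?_⟩, fun x hx a => ?_⟩,
    fun h => hJ.1.1.one_notMem hJ.2.1 ?_, fun x y hxy => hJ.2.2 (f x) (f y) ?_⟩
  · simpa using hJ.1.1.1
  · simpa using hJ.1.1.2.1 _ hx _ hy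
  · simpa using hJ.1.1.2.2.1 _ hx (f a)
  · simpa using hJ.1.1.2.2.2 _ hx
  · simpa using hJ.1.2 _ hx (f a)
  · simpa using Set.eq_univ_iff_forall.mp h 1
  · simpa using hxy

def IsRightIdealSet.toIdeal (hJ : IsRightIdealSet J) : Ideal Aᵐᵒᵖ where
  carrier := MulOpposite.unop ⁻¹' J
  add_mem' hx hy := hJ.2.1 _ hx _ hy
  zero_mem' := hJ.1
  smul_mem' c _ hx := hJ.2.2.1 _ hx c.unop

lemma isMaxRightIdealSet_preimage_op {M : Ideal Aᵐᵒᵖ} (hM : M.IsMaximal) :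
    IsMaxRightIdealSet (MulOpposite.op ⁻¹' (M : Set Aᵐᵒᵖ)) := by
  have hM1 : (1 : Aᵐᵒᵖ) ∉ M := (Ideal.ne_top_iff_one M).mp hM.ne_top
  refine ⟨⟨M.zero_mem, fun x hx y hy => M.add_mem hx hy,
    fun x hx a => M.mul_mem_left (MulOpposite.op a) hx, fun x hx => M.neg_mem hx⟩,
    fun h => hM1 (Set.eq_univ_iff_forall.mp h 1), fun K hK hMK hKne => ?_⟩
  have hKM : hK.toIdeal = M :=
    (hM.eq_of_le ((Ideal.ne_top_iff_one _).mpr (hK.one_notMem hKne)) fun x hx => hMK hx).symm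
  ext x
  exact (SetLike.ext_iff.mp hKM (MulOpposite.op x))

lemma IsRightIdealSet.exists_isMaxRightIdealSet_superset (hJ : IsRightIdealSet J)
    (h1 : (1 : A) ∉ J) : ∃ M, IsMaxRightIdealSet M ∧ J ⊆ M := by
  obtain ⟨M, hM, hJM⟩ := hJ.toIdeal.exists_le_maximal ((Ideal.ne_top_iff_one _).mpr h1)
  exact ⟨_, isMaxRightIdealSet_preimage_op hM, fun x hx => hJM hx⟩

lemma IsMaxRightIdealSet.isCompletelyPrimeIdealSet (hmax : IsMaxRightIdealSet J)
    (h2 : IsTwoSidedIdealSet J) : IsCompletelyPrimeIdealSet J := by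
  refine ⟨h2, hmax.2.1, fun x y hxy => or_iff_not_imp_left.mpr fun hx => ?_⟩
  obtain ⟨⟨h0, hadd, hmul, hneg⟩, hmul'⟩ := h2
  have hdiv : IsRightIdealSet {z : A | x * z ∈ J} :=
    ⟨by simpa using h0, fun a ha b hb => by simpa [mul_add] using hadd _ ha _ hb,
      fun a ha c => by simpa [mul_assoc] using hmul _ ha c, fun a ha => by simpa using hneg _ ha⟩
  have hdiv_ne : {z : A | x * z ∈ J} ≠ Set.univ :=
    fun h => hx (by simpa using Set.eq_univ_iff_forall.mp h 1)
  have hy : y ∈ {z : A | x * z ∈ J} := hxy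
  rwa [hmax.2.2 _ hdiv (fun j hj => hmul' j hj x) hdiv_ne] at hy

end RightIdeals

section FiniteType

variable {A : Type*} [Ring A]

lemma exists_mul_eq_one_of_forall_notMem {a : A}
    (ha : ∀ J : Set A, IsMaxRightIdealSet J → a ∉ J) : ∃ b, a * b = 1 := by
  by_contra hno
  have hrange : IsRightIdealSet (Set.range (a * ·)) :=
    ⟨⟨0, mul_zero a⟩, by rintro _ ⟨b, rfl⟩ _ ⟨c, rfl⟩; exact ⟨b + c, mul_add a b c⟩,
      by rintro _ ⟨b, rfl⟩ c; exact ⟨b * c, (mul_assoc a b c).symm⟩,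
      by rintro _ ⟨b, rfl⟩; exact ⟨-b, mul_neg a b⟩⟩
  obtain ⟨M, hM, hrM⟩ := hrange.exists_isMaxRightIdealSet_superset fun ⟨b, hb⟩ => hno ⟨b, hb⟩
  exact ha M hM (hrM ⟨1, mul_one a⟩)

lemma isUnit_of_forall_notMem {ι : Type*} {I : ι → Set A}
    (hIall : ∀ J : Set A, IsMaxRightIdealSet J → ∃ i, J = I i)
    (hI2 : ∀ i, IsTwoSidedIdealSet (I i)) {a : A} (ha : ∀ i, a ∉ I i) : IsUnit a := by
  have hinv : ∀ x : A, (∀ i, x ∉ I i) → ∃ y, x * y = 1 := fun x hx =>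
    exists_mul_eq_one_of_forall_notMem fun J hJ => by
      obtain ⟨i, rfl⟩ := hIall J hJ
      exact hx i
  obtain ⟨b, hab⟩ := hinv a ha
  have hb : ∀ J : Set A, IsMaxRightIdealSet J → b ∉ J := fun J hJ hbJ => by
    obtain ⟨i, rfl⟩ := hIall J hJ
    exact hJ.1.one_notMem hJ.2.1 (hab ▸ (hI2 i).2 b hbJ a)
  obtain ⟨c, hbc⟩ := exists_mul_eq_one_of_forall_notMem hb
  have hac : a = c := left_inv_eq_right_inv hab hbc
  exact ⟨⟨a, b, hab, hac ▸ hbc⟩, rfl⟩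

end FiniteType

section PrimeAvoidance

variable {A : Type*} [Ring A] {ι : Type*} {P : Set A} {Q : ι → Set A}

/-- With `x i₀ ∈ Q i₀` and the product of the other `x i` outside `Q i₀` but inside every other
`Q j`, the sum `x i₀ + ∏_{i ≠ i₀} x i` avoids all the `Q j`. -/
lemma IsRightIdealSet.exists_mem_forall_notMem_of_separated (hP : IsRightIdealSet P)
    (hQ : ∀ i, IsCompletelyPrimeIdealSet (Q i)) [DecidableEq ι] {s : Finset ι} {i₀ : ι}
    (hi₀ : i₀ ∈ s) (hs : (s.erase i₀).Nonempty) {x : ι → A} (hxP : ∀ i ∈ s, x i ∈ P)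
    (hxQ : ∀ i ∈ s, ∀ j ∈ s, x i ∈ Q j ↔ j = i) : ∃ y ∈ P, ∀ j ∈ s, y ∉ Q j := by
  set l := (s.erase i₀).toList.map x
  have hlP : l.prod ∈ P := hP.list_prod_mem (by simpa [l] using hs.ne_empty) fun y hy => by
    obtain ⟨i, hi, rfl⟩ := List.mem_map.mp hy
    exact hxP i (Finset.mem_of_mem_erase (Finset.mem_toList.mp hi))
  have hlQ₀ : l.prod ∉ Q i₀ := (hQ i₀).list_prod_notMem fun y hy => by
    obtain ⟨i, hi, rfl⟩ := List.mem_map.mp hy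
    obtain ⟨hne, hi⟩ := Finset.mem_erase.mp (Finset.mem_toList.mp hi)
    exact fun h => hne ((hxQ i hi i₀ hi₀).mp h).symm
  have hlQ : ∀ j ∈ s.erase i₀, l.prod ∈ Q j := fun j hj =>
    (hQ j).1.list_prod_mem (List.mem_map_of_mem (Finset.mem_toList.mpr hj))
      ((hxQ j (Finset.mem_of_mem_erase hj) j (Finset.mem_of_mem_erase hj)).mpr rfl)
  refine ⟨x i₀ + l.prod, hP.2.1 _ (hxP i₀ hi₀) _ hlP, fun j hj hy => ?_⟩
  by_cases hji : j = i₀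
  · subst hji
    exact hlQ₀ (((hQ j).1.1.add_mem_iff_right ((hxQ j hj j hj).mpr rfl)).mp hy)
  · rw [add_comm] at hy
    exact hji ((hxQ i₀ hi₀ j hj).mp
      (((hQ j).1.1.add_mem_iff_right (hlQ j (Finset.mem_erase.mpr ⟨hji, hj⟩))).mp hy))

theorem IsRightIdealSet.exists_subset_of_subset_biUnion (hP : IsRightIdealSet P)
    (hQ : ∀ i, IsCompletelyPrimeIdealSet (Q i)) (s : Finset ι) (hsub : P ⊆ ⋃ i ∈ s, Q i) :
    ∃ i ∈ s, P ⊆ Q i := by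
  classical
  induction s using Finset.strongInduction with
  | H s ih =>
  by_cases hred : ∃ i ∈ s, P ⊆ ⋃ j ∈ s.erase i, Q j
  · obtain ⟨i, hi, hPi⟩ := hred
    obtain ⟨j, hj, hPj⟩ := ih _ (Finset.erase_ssubset hi) hPi
    exact ⟨j, Finset.mem_of_mem_erase hj, hPj⟩
  have hmemQ : ∀ y ∈ P, ∃ j ∈ s, y ∈ Q j := fun y hy => by simpa using hsub hy
  obtain ⟨i₀, hi₀, -⟩ := hmemQ 0 hP.1
  have hsep : ∀ i ∈ s, ∃ y ∈ P, ∀ j ∈ s, y ∈ Q j ↔ j = i := fun i hi => by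
    obtain ⟨y, hyP, hyQ⟩ := Set.not_subset.mp fun h => hred ⟨i, hi, h⟩
    have hyQ' : ∀ j ∈ s, j ≠ i → y ∉ Q j := fun j hj hji hyj =>
      hyQ (Set.mem_biUnion (Finset.mem_erase.mpr ⟨hji, hj⟩) hyj)
    refine ⟨y, hyP, fun j hj => ⟨fun h => by_contra fun hji => hyQ' j hj hji h, ?_⟩⟩
    rintro rfl
    obtain ⟨k, hk, hyk⟩ := hmemQ y hyP
    by_cases hkj : k = j
    · exact hkj ▸ hyk
    · exact (hyQ' k hk hkj hyk).elim
  choose! x hxP hxQ using hsep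
  by_cases hs : (s.erase i₀).Nonempty
  · obtain ⟨y, hyP, hyQ⟩ := hP.exists_mem_forall_notMem_of_separated hQ hi₀ hs hxP hxQ
    obtain ⟨j, hj, hyj⟩ := hmemQ y hyP
    exact (hyQ j hj hyj).elim
  · refine ⟨i₀, hi₀, fun y hy => ?_⟩
    obtain ⟨j, hj, hyj⟩ := hmemQ y hy
    have hji : j = i₀ := by_contra fun hji =>
      hs ⟨j, Finset.mem_erase.mpr ⟨hji, hj⟩⟩
    exact hji ▸ hyj

end PrimeAvoidance

lemma exists_ringOfType_le_card {S : Type*} [Ring S] {ι : Type*} [Fintype ι] (Q : ι → Set S)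
    (hQ2 : ∀ i, IsTwoSidedIdealSet (Q i))
    (hmax : ∀ P : Set S, IsMaxRightIdealSet P → ∃ i, P = Q i) :
    ∃ k ≤ Fintype.card ι, RingOfType S k := by
  classical
  let s := (Finset.univ.image Q).filter IsMaxRightIdealSet
  refine ⟨s.card, (Finset.card_filter_le _ _).trans Finset.card_image_le, s, rfl,
    fun J => ⟨fun hJ => ?_, fun hJ => (Finset.mem_filter.mp hJ).2⟩, fun J hJ => ?_⟩
  · obtain ⟨i, rfl⟩ := hmax J hJ
    exact Finset.mem_filter.mpr ⟨Finset.mem_image_of_mem Q (Finset.mem_univ i), hJ⟩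
  · obtain ⟨i, -, rfl⟩ := Finset.mem_image.mp (Finset.mem_filter.mp hJ).1
    exact hQ2 i

lemma MorphEnd.isUnit_of_isUnit {A : Type u} [Ring A] {M₀ M₁ : Type u} [AddCommGroup M₀]
    [AddCommGroup M₁] [Module A M₀] [Module A M₁] {μ : M₀ →ₗ[A] M₁} {u : MorphEnd μ}
    (h₀ : IsUnit (u : Module.End A M₀ × Module.End A M₁).1)
    (h₁ : IsUnit (u : Module.End A M₀ × Module.End A M₁).2) : IsUnit u := by
  have hinv : ((↑h₀.unit⁻¹, ↑h₁.unit⁻¹) : Module.End A M₀ × Module.End A M₁) ∈ MorphEnd μ :=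
    fun x => by
      have hcomm : (u : Module.End A M₀ × Module.End A M₁).2
          (μ ((↑h₀.unit⁻¹ : Module.End A M₀) x)) = μ x := by
        rw [u.2, ← Module.End.mul_apply, h₀.mul_val_inv, Module.End.one_apply]
      rw [← hcomm, ← Module.End.mul_apply, h₁.val_inv_mul, Module.End.one_apply]
  exact ⟨⟨u, ⟨_, hinv⟩, Subtype.ext (Prod.ext h₀.mul_val_inv h₁.mul_val_inv),
    Subtype.ext (Prod.ext h₀.val_inv_mul h₁.val_inv_mul)⟩, rfl⟩

theorem morphEnd_type_le_add_general (R : Type u) [Ring R] (M₀ M₁ : Type u)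
    [AddCommGroup M₀] [AddCommGroup M₁] [Module Rᵐᵒᵖ M₀] [Module Rᵐᵒᵖ M₁]
    (μ : M₀ →ₗ[Rᵐᵒᵖ] M₁) (n m : ℕ)
    (I : Fin n → Set (Module.End Rᵐᵒᵖ M₀)) (K : Fin m → Set (Module.End Rᵐᵒᵖ M₁))
    (hImax : ∀ t, IsMaxRightIdealSet (I t)) (hKmax : ∀ q, IsMaxRightIdealSet (K q))
    (hIall : ∀ J : Set (Module.End Rᵐᵒᵖ M₀), IsMaxRightIdealSet J → ∃ t, J = I t)
    (hKall : ∀ J : Set (Module.End Rᵐᵒᵖ M₁), IsMaxRightIdealSet J → ∃ q, J = K q)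
    (hI2 : ∀ t, IsTwoSidedIdealSet (I t)) (hK2 : ∀ q, IsTwoSidedIdealSet (K q)) :
    (∃ k ≤ n + m, RingOfType (MorphEnd μ) k) ∧
    (∀ t, IsCompletelyPrimeIdealSet
      {u : MorphEnd μ | (u : Module.End Rᵐᵒᵖ M₀ × Module.End Rᵐᵒᵖ M₁).1 ∈ I t}) ∧
    (∀ q, IsCompletelyPrimeIdealSet
      {u : MorphEnd μ | (u : Module.End Rᵐᵒᵖ M₀ × Module.End Rᵐᵒᵖ M₁).2 ∈ K q}) ∧
    ∀ P : Set (MorphEnd μ), IsMaxRightIdealSet P →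
      (∃ t, P = {u : MorphEnd μ |
          (u : Module.End Rᵐᵒᵖ M₀ × Module.End Rᵐᵒᵖ M₁).1 ∈ I t}) ∨
      (∃ q, P = {u : MorphEnd μ |
          (u : Module.End Rᵐᵒᵖ M₀ × Module.End Rᵐᵒᵖ M₁).2 ∈ K q}) := by
  have hIcp : ∀ t, IsCompletelyPrimeIdealSet
      {u : MorphEnd μ | (u : Module.End Rᵐᵒᵖ M₀ × Module.End Rᵐᵒᵖ M₁).1 ∈ I t} := fun t =>
    ((hImax t).isCompletelyPrimeIdealSet (hI2 t)).preimage
      ((RingHom.fst _ _).comp (MorphEnd μ).subtype)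
  have hKcp : ∀ q, IsCompletelyPrimeIdealSet
      {u : MorphEnd μ | (u : Module.End Rᵐᵒᵖ M₀ × Module.End Rᵐᵒᵖ M₁).2 ∈ K q} := fun q =>
    ((hKmax q).isCompletelyPrimeIdealSet (hK2 q)).preimage
      ((RingHom.snd _ _).comp (MorphEnd μ).subtype)
  let Q : Fin n ⊕ Fin m → Set (MorphEnd μ) :=
    Sum.elim (fun t => {u | (u : Module.End Rᵐᵒᵖ M₀ × Module.End Rᵐᵒᵖ M₁).1 ∈ I t})
      (fun q => {u | (u : Module.End Rᵐᵒᵖ M₀ × Module.End Rᵐᵒᵖ M₁).2 ∈ K q})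
  have hQ : ∀ i, IsCompletelyPrimeIdealSet (Q i) := Sum.rec hIcp hKcp
  have hmax : ∀ P, IsMaxRightIdealSet P → ∃ i, P = Q i := by
    intro P hP
    have hcover : P ⊆ ⋃ i ∈ Finset.univ, Q i := fun u hu => by
      by_contra hu'
      simp only [Finset.mem_univ, Set.iUnion_true, Set.mem_iUnion, not_exists, Sum.forall, Q,
        Sum.elim_inl, Sum.elim_inr, Set.mem_ofPred_eq] at hu'
      exact hP.1.not_isUnit_of_mem hP.2.1 hu <| MorphEnd.isUnit_of_isUnit
        (isUnit_of_forall_notMem hIall hI2 hu'.1) (isUnit_of_forall_notMem hKall hK2 hu'.2)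
    obtain ⟨i, -, hPi⟩ := hP.1.exists_subset_of_subset_biUnion hQ Finset.univ hcover
    exact ⟨i, (hP.2.2 _ (hQ i).1.1 hPi (hQ i).2.1).symm⟩
  refine ⟨?_, hIcp, hKcp, fun P hP => ?_⟩
  · simpa using exists_ringOfType_le_card Q (fun i => (hQ i).1) hmax
  · obtain ⟨t | q, rfl⟩ := hmax P hP
    exacts [Or.inl ⟨t, rfl⟩, Or.inr ⟨q, rfl⟩]

/-- Let `M` be an object of `Morph(Mod-R)`, i.e. `μ : M₀ → M₁` between
right `R`-modules. Suppose `End(M₀)` is a ring of type `n` with maximal right ideals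
`I_1, …, I_n`, and `End(M₁)` is of type `m` with maximal right ideals `K_1, …, K_m`.
Then `E_M` is a ring of type at most `n + m`, and every maximal right ideal of `E_M` is
among the completely prime two-sided ideals `(I_t × End(M₁)) ∩ E_M` and
`(End(M₀) × K_q) ∩ E_M` (identifying `E_M` with its image in `End(M₀) × End(M₁)`). -/
theorem morphEnd_type_le_add (R : Type u) [Ring R] (M₀ M₁ : Type u)
    [AddCommGroup M₀] [AddCommGroup M₁] [Module Rᵐᵒᵖ M₀] [Module Rᵐᵒᵖ M₁]
    (μ : M₀ →ₗ[Rᵐᵒᵖ] M₁) (n m : ℕ)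
    (I : Fin n → Set (Module.End Rᵐᵒᵖ M₀)) (K : Fin m → Set (Module.End Rᵐᵒᵖ M₁))
    (hIinj : Function.Injective I) (hKinj : Function.Injective K)
    (hImax : ∀ t, IsMaxRightIdealSet (I t)) (hKmax : ∀ q, IsMaxRightIdealSet (K q))
    (hIall : ∀ J : Set (Module.End Rᵐᵒᵖ M₀), IsMaxRightIdealSet J → ∃ t, J = I t)
    (hKall : ∀ J : Set (Module.End Rᵐᵒᵖ M₁), IsMaxRightIdealSet J → ∃ q, J = K q)
    (hI2 : ∀ t, IsTwoSidedIdealSet (I t)) (hK2 : ∀ q, IsTwoSidedIdealSet (K q)) :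
    (∃ k ≤ n + m, RingOfType (MorphEnd μ) k) ∧
    (∀ t, IsCompletelyPrimeIdealSet
      {u : MorphEnd μ | (u : Module.End Rᵐᵒᵖ M₀ × Module.End Rᵐᵒᵖ M₁).1 ∈ I t}) ∧
    (∀ q, IsCompletelyPrimeIdealSet
      {u : MorphEnd μ | (u : Module.End Rᵐᵒᵖ M₀ × Module.End Rᵐᵒᵖ M₁).2 ∈ K q}) ∧
    ∀ P : Set (MorphEnd μ), IsMaxRightIdealSet P →
      (∃ t, P = {u : MorphEnd μ |
          (u : Module.End Rᵐᵒᵖ M₀ × Module.End Rᵐᵒᵖ M₁).1 ∈ I t}) ∨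
      (∃ q, P = {u : MorphEnd μ |
          (u : Module.End Rᵐᵒᵖ M₀ × Module.End Rᵐᵒᵖ M₁).2 ∈ K q}) :=
  morphEnd_type_le_add_general R M₀ M₁ μ n m I K hImax hKmax hIall hKall hI2 hK2
end

section
/- Let M be an object of Morph(Mod-R), E_M its endomorphism ring in Morph(Mod-R), ε : E_M → End(M0) × End(M1) the canonical embedding, π_i : End(M0) × End(M1) → End(M_i) the projections (i = 0, 1), and E_i := π_i(ε(E_M)). Then E_M is a local ring if and only if one of the following three conditions holds: (1) M0 = 0 and End(M1) is a local ring; (2) M1 = 0 and End(M0) is a local ring; (3) M0 ≠ 0, M1 ≠ 0 and, for every endomorphism u = (u0, u1) ∈ E_M: (a) either u0 or 1 − u0 is invertible in E0, and (b) u0 is invertible in E0 if and only if u1 is invertible in E1. -/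
/-!
An endomorphism `u = (u₀, u₁)` of `μ : M₀ → M₁` is invertible in `E_M` as soon as `u₀` and `u₁`
are invertible endomorphisms, because the pair of inverses again intertwines `μ`. Hence (a) and
(b) make `u` or `1 - u` invertible. Conversely, let `E_M` be local and `M₀ ≠ 0`. If `w ∈ E_M`
has `w₀ = 1`, then `1 - w` maps to `0` in the nonzero ring `E₀`, so `w` is invertible; applied
to `uv` and `vu` for a lift `v` of `u₀⁻¹`, this shows that `u₀ ∈ E₀ˣ` forces `u ∈ E_Mˣ`, and
symmetrically for `u₁`. If `M₀` or `M₁` is zero, `E_M` is the endomorphism ring of the other.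
-/

universe u

section ProjImages

variable {A : Type u} [Ring A] {M₀ M₁ : Type u} [AddCommGroup M₀] [AddCommGroup M₁]
  [Module A M₀] [Module A M₁]

/-- `E₀ = π₀(ε(E_M))`, the image of `E_M` under the first projection. -/
def morphE0 (μ : M₀ →ₗ[A] M₁) : Subring (Module.End A M₀) :=
  (MorphEnd μ).map (RingHom.fst (Module.End A M₀) (Module.End A M₁))

/-- `E₁ = π₁(ε(E_M))`, the image of `E_M` under the second projection. -/
def morphE1 (μ : M₀ →ₗ[A] M₁) : Subring (Module.End A M₁) :=
  (MorphEnd μ).map (RingHom.snd (Module.End A M₀) (Module.End A M₁))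

/-- The first component of an element of `E_M`, as an element of `E₀`. -/
def proj0 (μ : M₀ →ₗ[A] M₁) (u : MorphEnd μ) : morphE0 μ :=
  ⟨(u : Module.End A M₀ × Module.End A M₁).1, ⟨u.1, u.2, rfl⟩⟩

/-- The second component of an element of `E_M`, as an element of `E₁`. -/
def proj1 (μ : M₀ →ₗ[A] M₁) (u : MorphEnd μ) : morphE1 μ :=
  ⟨(u : Module.End A M₀ × Module.End A M₁).2, ⟨u.1, u.2, rfl⟩⟩

end ProjImages

namespace IsLocalRing

variable {R S : Type*} [Ring R] [IsLocalRing R] [Ring S] [Nontrivial S]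

theorem isUnit_of_map_eq_one (f : R →+* S) {a : R} (ha : f a = 1) : IsUnit a :=
  (isUnit_or_isUnit_of_add_one (sub_add_cancel 1 a)).resolve_left fun h => by
    have h' := h.map f
    rw [map_sub, map_one, ha, sub_self] at h'
    exact not_isUnit_zero h'

theorem isLocalHom_of_surjective (f : R →+* S) (hf : Function.Surjective f) :
    IsLocalHom f where
  map_nonunit a ha := by
    obtain ⟨b', hab', hb'a⟩ := isUnit_iff_exists.1 ha
    obtain ⟨b, rfl⟩ := hf b'
    obtain ⟨c, hc⟩ := (isUnit_of_map_eq_one f (a := a * b) (by rwa [map_mul])).exists_right_inv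
    obtain ⟨d, hd⟩ := (isUnit_of_map_eq_one f (a := b * a) (by rwa [map_mul])).exists_left_inv
    exact isUnit_iff_exists_and_exists.2
      ⟨⟨b * c, by rwa [← mul_assoc]⟩, ⟨d * b, by rwa [mul_assoc]⟩⟩

end IsLocalRing

theorem RingEquiv.isLocalRing_iff {R S : Type*} [Semiring R] [Semiring S] (e : R ≃+* S) :
    IsLocalRing R ↔ IsLocalRing S :=
  ⟨fun _ => (e.symm : S →+* R).domain_isLocalRing, fun _ => (e : R →+* S).domain_isLocalRing⟩

theorem not_isLocalRing_of_subsingleton (R : Type*) [Semiring R] [Subsingleton R] :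
    ¬ IsLocalRing R :=
  fun h => not_nontrivial R h.toNontrivial

namespace MorphEnd

variable {A : Type u} [Ring A] {M₀ M₁ : Type u} [AddCommGroup M₀] [AddCommGroup M₁]
  [Module A M₀] [Module A M₁] (μ : M₀ →ₗ[A] M₁)

def proj0Hom : MorphEnd μ →+* morphE0 μ :=
  (RingHom.fst _ _).restrict _ _ fun u hu => ⟨u, hu, rfl⟩

def proj1Hom : MorphEnd μ →+* morphE1 μ :=
  (RingHom.snd _ _).restrict _ _ fun u hu => ⟨u, hu, rfl⟩

theorem proj0Hom_surjective : Function.Surjective (proj0Hom μ) :=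
  fun ⟨_, u, hu, rfl⟩ => ⟨⟨u, hu⟩, rfl⟩

theorem proj1Hom_surjective : Function.Surjective (proj1Hom μ) :=
  fun ⟨_, u, hu, rfl⟩ => ⟨⟨u, hu⟩, rfl⟩

theorem isUnit_of_isUnit_fst_of_isUnit_snd {u : MorphEnd μ}
    (h₀ : IsUnit (u : Module.End A M₀ × Module.End A M₁).1)
    (h₁ : IsUnit (u : Module.End A M₀ × Module.End A M₁).2) : IsUnit u := by
  rcases u with ⟨⟨u₀, u₁⟩, hu⟩
  obtain ⟨v₀, rfl⟩ := h₀
  obtain ⟨v₁, rfl⟩ := h₁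
  have hinv : ((↑v₀⁻¹, ↑v₁⁻¹) : Module.End A M₀ × Module.End A M₁) ∈ MorphEnd μ := fun x => by
    obtain ⟨y, rfl⟩ : ∃ y, (v₀ : Module.End A M₀) y = x := ⟨(↑v₀⁻¹ : Module.End A M₀) x, by
      rw [← Module.End.mul_apply, v₀.mul_inv, Module.End.one_apply]⟩
    rw [← hu y, ← Module.End.mul_apply, ← Module.End.mul_apply, v₁.inv_mul, v₀.inv_mul,
      Module.End.one_apply, Module.End.one_apply]
  exact isUnit_iff_exists.2 ⟨⟨_, hinv⟩, Subtype.ext (Prod.ext v₀.mul_inv v₁.mul_inv),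
    Subtype.ext (Prod.ext v₀.inv_mul v₁.inv_mul)⟩

theorem isUnit_of_isUnit_proj0_of_isUnit_proj1 {u : MorphEnd μ} (h₀ : IsUnit (proj0 μ u))
    (h₁ : IsUnit (proj1 μ u)) : IsUnit u :=
  isUnit_of_isUnit_fst_of_isUnit_snd μ (h₀.map (morphE0 μ).subtype) (h₁.map (morphE1 μ).subtype)

theorem isUnit_proj0_iff [IsLocalRing (MorphEnd μ)] [Nontrivial M₀] (u : MorphEnd μ) :
    IsUnit (proj0 μ u) ↔ IsUnit u :=
  haveI := IsLocalRing.isLocalHom_of_surjective _ (proj0Hom_surjective μ)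
  isUnit_map_iff (proj0Hom μ) u

theorem isUnit_proj1_iff [IsLocalRing (MorphEnd μ)] [Nontrivial M₁] (u : MorphEnd μ) :
    IsUnit (proj1 μ u) ↔ IsUnit u :=
  haveI := IsLocalRing.isLocalHom_of_surjective _ (proj1Hom_surjective μ)
  isUnit_map_iff (proj1Hom μ) u

theorem isLocalRing_iff [Nontrivial M₀] [Nontrivial M₁] :
    IsLocalRing (MorphEnd μ) ↔ ∀ u : MorphEnd μ,
      (IsUnit (proj0 μ u) ∨ IsUnit (1 - proj0 μ u)) ∧
      (IsUnit (proj0 μ u) ↔ IsUnit (proj1 μ u)) := by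
  constructor
  · intro _ u
    refine ⟨?_, by rw [isUnit_proj0_iff, isUnit_proj1_iff]⟩
    change IsUnit (proj0 μ u) ∨ IsUnit (proj0 μ (1 - u))
    rw [isUnit_proj0_iff, isUnit_proj0_iff]
    exact IsLocalRing.isUnit_or_isUnit_of_add_one (add_sub_cancel u 1)
  · intro h
    have : Nontrivial (MorphEnd μ) := (proj0Hom_surjective μ).nontrivial
    have isUnit_of_isUnit_proj0 (v : MorphEnd μ) (hv : IsUnit (proj0 μ v)) : IsUnit v :=
      isUnit_of_isUnit_proj0_of_isUnit_proj1 μ hv ((h v).2.1 hv)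
    exact .of_isUnit_or_isUnit_one_sub_self fun u =>
      (h u).1.imp (isUnit_of_isUnit_proj0 u) (isUnit_of_isUnit_proj0 (1 - u))

noncomputable def sndEquiv [Subsingleton M₀] : MorphEnd μ ≃+* Module.End A M₁ :=
  RingEquiv.ofBijective ((RingHom.snd _ _).comp (MorphEnd μ).subtype)
    ⟨fun _ _ h => Subtype.ext (Prod.ext (Subsingleton.elim _ _) h),
      fun f => ⟨⟨(0, f), fun x => by simp [Subsingleton.elim x 0]⟩, rfl⟩⟩

noncomputable def fstEquiv [Subsingleton M₁] : MorphEnd μ ≃+* Module.End A M₀ :=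
  RingEquiv.ofBijective ((RingHom.fst _ _).comp (MorphEnd μ).subtype)
    ⟨fun _ _ h => Subtype.ext (Prod.ext h (Subsingleton.elim _ _)),
      fun f => ⟨⟨(f, 0), fun _ => Subsingleton.elim _ _⟩, rfl⟩⟩

end MorphEnd

/-- Let `M` be an object of `Morph(Mod-R)`, `E_M` its endomorphism
ring, and `E_i` the image of `E_M` in `End(M_i)` under the canonical projection. Then
`E_M` is a local ring if and only if one of the following holds: (1) `M₀ = 0` and
`End(M₁)` is local; (2) `M₁ = 0` and `End(M₀)` is local; (3) `M₀ ≠ 0`, `M₁ ≠ 0` and for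
every `u = (u₀, u₁) ∈ E_M`: (a) either `u₀` or `1 - u₀` is invertible in `E₀`, and
(b) `u₀` is invertible in `E₀` iff `u₁` is invertible in `E₁`. -/
theorem morphEnd_local_iff (R : Type u) [Ring R] (M₀ M₁ : Type u)
    [AddCommGroup M₀] [AddCommGroup M₁] [Module Rᵐᵒᵖ M₀] [Module Rᵐᵒᵖ M₁]
    (μ : M₀ →ₗ[Rᵐᵒᵖ] M₁) :
    IsLocalRing (MorphEnd μ) ↔
      (Subsingleton M₀ ∧ IsLocalRing (Module.End Rᵐᵒᵖ M₁)) ∨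
      (Subsingleton M₁ ∧ IsLocalRing (Module.End Rᵐᵒᵖ M₀)) ∨
      (Nontrivial M₀ ∧ Nontrivial M₁ ∧
        ∀ u : MorphEnd μ,
          (IsUnit (proj0 μ u) ∨ IsUnit (1 - proj0 μ u)) ∧
          (IsUnit (proj0 μ u) ↔ IsUnit (proj1 μ u))) := by
  rcases subsingleton_or_nontrivial M₀ with h₀ | h₀
  · have := not_isLocalRing_of_subsingleton (Module.End Rᵐᵒᵖ M₀)
    have := not_nontrivial_iff_subsingleton.2 h₀
    rw [(MorphEnd.sndEquiv μ).isLocalRing_iff]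
    tauto
  rcases subsingleton_or_nontrivial M₁ with h₁ | h₁
  · have := not_isLocalRing_of_subsingleton (Module.End Rᵐᵒᵖ M₁)
    have := not_nontrivial_iff_subsingleton.2 h₁
    rw [(MorphEnd.fstEquiv μ).isLocalRing_iff]
    tauto
  · rw [MorphEnd.isLocalRing_iff]
    simp only [not_subsingleton, false_and, false_or, h₀, h₁, true_and]
end

section
/- Let M be an object of Morph(Mod-R) such that both End(M0) and End(M1) are local rings. Then the endomorphism ring E_M of M in Morph(Mod-R) is a local ring if and only if one of the following two conditions holds: (1) for every endomorphism (u0, u1) ∈ E_M, if u0 is an automorphism of M0, then u1 is an automorphism of M1; or (2) for every endomorphism (u0, u1) ∈ E_M, if u1 is an automorphism of M1, then u0 is an automorphism of M0. -/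
/-!
Units of `E_M` are exactly the pairs `(u₀, u₁)` with both components invertible, since the
inverse pair again commutes with `μ`. So the projections `E_M → End(M₀)` and `E_M → End(M₁)`
jointly reflect units. If, say, condition (1) holds, then the first projection alone reflects
units, and a ring with a unit-reflecting map to a local ring is local. Conversely, if both
conditions fail, pick `u` with only `u₀` invertible and `v` with only `v₁` invertible: in the
local rings `End(M₀)` and `End(M₁)` a unit plus a non-unit is a unit, so `u + v` is a unit of
`E_M` although `u` and `v` are not, and `E_M` is not local.
-/

universe u

theorem IsLocalRing.isUnit_add_of_not_isUnit {R : Type*} [Ring R] [IsLocalRing R] {a b : R}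
    (ha : IsUnit a) (hb : ¬IsUnit b) : IsUnit (a + b) :=
  (isUnit_or_isUnit_of_isUnit_add (a := a + b) (b := -b) (by simpa using ha)).resolve_right
    (by simpa using hb)

section JointlyUnitReflecting

variable {S S₀ S₁ : Type*} [Ring S] [Ring S₀] [Ring S₁] [IsLocalRing S₀] [IsLocalRing S₁]
  (f : S →+* S₀) (g : S →+* S₁)

theorem isLocalRing_iff_of_isUnit_iff_isUnit_and_isUnit
    (hunit : ∀ s, IsUnit s ↔ IsUnit (f s) ∧ IsUnit (g s)) :
    IsLocalRing S ↔
      (∀ s, IsUnit (f s) → IsUnit (g s)) ∨ (∀ s, IsUnit (g s) → IsUnit (f s)) := by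
  constructor
  · intro hS
    by_contra! ⟨⟨u, hfu, hgu⟩, ⟨v, hgv, hfv⟩⟩
    have huv : IsUnit (u + v) := by
      rw [hunit, map_add, map_add, add_comm (g u)]
      exact ⟨IsLocalRing.isUnit_add_of_not_isUnit hfu hfv,
        IsLocalRing.isUnit_add_of_not_isUnit hgv hgu⟩
    rcases IsLocalRing.isUnit_or_isUnit_of_isUnit_add huv with hu | hv
    · exact hgu ((hunit u).1 hu).2
    · exact hfv ((hunit v).1 hv).1
  · rintro (hfg | hgf)
    · have : IsLocalHom f := ⟨fun s hs => (hunit s).2 ⟨hs, hfg s hs⟩⟩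
      exact f.domain_isLocalRing
    · have : IsLocalHom g := ⟨fun s hs => (hunit s).2 ⟨hgf s hs, hs⟩⟩
      exact g.domain_isLocalRing

end JointlyUnitReflecting

namespace MorphEnd

variable {A : Type u} [Ring A] {M₀ M₁ : Type u} [AddCommGroup M₀] [AddCommGroup M₁]
  [Module A M₀] [Module A M₁] {μ : M₀ →ₗ[A] M₁}

theorem inv_mem {w : (Module.End A M₀ × Module.End A M₁)ˣ}
    (hw : (w : Module.End A M₀ × Module.End A M₁) ∈ MorphEnd μ) :
    (↑w⁻¹ : Module.End A M₀ × Module.End A M₁) ∈ MorphEnd μ := fun x => by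
  set w' : Module.End A M₀ × Module.End A M₁ := ↑w⁻¹
  have hw₁ : (w : Module.End A M₀ × Module.End A M₁).1 (w'.1 x) = x :=
    LinearMap.congr_fun (congrArg Prod.fst w.mul_inv) x
  have hw₂ : ∀ y, w'.2 ((w : Module.End A M₀ × Module.End A M₁).2 y) = y :=
    LinearMap.congr_fun (congrArg Prod.snd w.inv_mul)
  calc w'.2 (μ x) = w'.2 (μ ((w : Module.End A M₀ × Module.End A M₁).1 (w'.1 x))) := by rw [hw₁]
    _ = w'.2 ((w : Module.End A M₀ × Module.End A M₁).2 (μ (w'.1 x))) := by rw [hw]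
    _ = μ (w'.1 x) := hw₂ _

theorem isUnit_iff (v : MorphEnd μ) :
    IsUnit v ↔ IsUnit (v : Module.End A M₀ × Module.End A M₁).1 ∧
      IsUnit (v : Module.End A M₀ × Module.End A M₁).2 := by
  rw [← Prod.isUnit_iff]
  refine ⟨fun hv => hv.map (MorphEnd μ).subtype, fun ⟨w, hw⟩ => ?_⟩
  have hwμ : (w : Module.End A M₀ × Module.End A M₁) ∈ MorphEnd μ := hw ▸ v.2
  refine ⟨⟨v, ⟨_, inv_mem hwμ⟩, Subtype.ext ?_, Subtype.ext ?_⟩, rfl⟩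
  · change (v : Module.End A M₀ × Module.End A M₁) * ↑w⁻¹ = 1
    rw [← hw, w.mul_inv]
  · change ↑w⁻¹ * (v : Module.End A M₀ × Module.End A M₁) = 1
    rw [← hw, w.inv_mul]

end MorphEnd

/-- Let `M` be an object of `Morph(Mod-R)` (a morphism `μ : M₀ → M₁`
of right `R`-modules) such that both `End(M₀)` and `End(M₁)` are local rings. Then the
endomorphism ring `E_M` is local if and only if (1) for every `(u₀, u₁) ∈ E_M`, if `u₀`
is an automorphism of `M₀` then `u₁` is an automorphism of `M₁`, or (2) for every
`(u₀, u₁) ∈ E_M`, if `u₁` is an automorphism of `M₁` then `u₀` is an automorphism of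
`M₀`. -/
theorem morphEnd_local_iff_of_local_ends (R : Type u) [Ring R] (M₀ M₁ : Type u)
    [AddCommGroup M₀] [AddCommGroup M₁] [Module Rᵐᵒᵖ M₀] [Module Rᵐᵒᵖ M₁]
    (μ : M₀ →ₗ[Rᵐᵒᵖ] M₁)
    (h₀ : IsLocalRing (Module.End Rᵐᵒᵖ M₀)) (h₁ : IsLocalRing (Module.End Rᵐᵒᵖ M₁)) :
    IsLocalRing (MorphEnd μ) ↔
      ((∀ u : MorphEnd μ,
          Function.Bijective (u : Module.End Rᵐᵒᵖ M₀ × Module.End Rᵐᵒᵖ M₁).1 →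
          Function.Bijective (u : Module.End Rᵐᵒᵖ M₀ × Module.End Rᵐᵒᵖ M₁).2) ∨
       (∀ u : MorphEnd μ,
          Function.Bijective (u : Module.End Rᵐᵒᵖ M₀ × Module.End Rᵐᵒᵖ M₁).2 →
          Function.Bijective (u : Module.End Rᵐᵒᵖ M₀ × Module.End Rᵐᵒᵖ M₁).1)) := by
  simp only [← Module.End.isUnit_iff]
  exact isLocalRing_iff_of_isUnit_iff_isUnit_and_isUnit
    ((RingHom.fst _ _).comp (MorphEnd μ).subtype) ((RingHom.snd _ _).comp (MorphEnd μ).subtype)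
    MorphEnd.isUnit_iff
end
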